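/- arXiv:2201.12871 — 2 statements merged into one kernel-verified Lean document; each statement's English description precedes it below -/
import Mathlib

section
/- Let B be a complex number with Im B ≠ 0, let ω, τ, x, y be real numbers, set ς := x + B y, and let 𝕂 := {k ∈ ℤ : there exist integers j, m with (1 − k)ς + ω + Bτ = j + B m}. If 𝕂 contains two distinct integers, then ω, τ, x, y are all rational numbers, and 𝕂 is an arithmetic progression: there exist k′ ∈ 𝕂 and a positive integer d such that 𝕂 = {k′ + d m : m ∈ ℤ}. -/
/-!
Writing `Λ = ℤ + Bℤ`, membership `k ∈ 𝕂` says `(1 - k)ς + ω + Bτ ∈ Λ`, so `𝕂` is the fibre of an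
affine map `ℤ → ℂ ⧸ Λ`. Once it contains `k₁` it is the coset `k₁ + {t : tς ∈ Λ}`, and a subgroup
of `ℤ` containing `k₂ - k₁ ≠ 0` is `dℤ` with `d > 0`. Since `1` and `B` are `ℝ`-linearly
independent, the memberships of `k₁` and `k₂` split into real conditions that give
`(k₂ - k₁)x, (k₂ - k₁)y ∈ ℤ`, so `x, y` are rational, and then so are `ω, τ`.
-/
theorem Int.exists_pos_eq_zmultiples {H : AddSubgroup ℤ} (hH : H ≠ ⊥) :
    ∃ d : ℤ, 0 < d ∧ H = AddSubgroup.zmultiples d := by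
  obtain ⟨a, rfl⟩ := Int.subgroup_cyclic H
  have ha : a ≠ 0 := by
    rintro rfl
    exact hH AddSubgroup.closure_singleton_zero
  refine ⟨a.natAbs, by omega, ?_⟩
  rw [Int.zmultiples_natAbs, AddSubgroup.zmultiples_eq_closure]

namespace AddSubgroup

variable {G : Type*} [AddCommGroup G] (L : AddSubgroup G) {s c : G} {k₁ : ℤ}

theorem zsmul_add_mem_iff_sub_zsmul_mem (h₁ : k₁ • s + c ∈ L) (k : ℤ) :
    k • s + c ∈ L ↔ (k - k₁) • s ∈ L := by
  rw [show k • s + c = (k - k₁) • s + (k₁ • s + c) by rw [sub_zsmul]; abel]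
  exact L.add_mem_cancel_right h₁

theorem exists_setOf_zsmul_add_mem_eq_arithProg {k₂ : ℤ} (h₁ : k₁ • s + c ∈ L)
    (h₂ : k₂ • s + c ∈ L) (hne : k₁ ≠ k₂) :
    ∃ d : ℤ, 0 < d ∧ {k : ℤ | k • s + c ∈ L} = {k | ∃ m : ℤ, k = k₁ + d * m} := by
  set H := L.comap (zmultiplesHom G s)
  have hH : H ≠ ⊥ := fun hbot ↦ by
    have : k₂ - k₁ ∈ H := (L.zsmul_add_mem_iff_sub_zsmul_mem h₁ k₂).1 h₂
    rw [hbot, mem_bot] at this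
    omega
  obtain ⟨d, hd, hHd⟩ := Int.exists_pos_eq_zmultiples hH
  refine ⟨d, hd, Set.ext fun k ↦ ?_⟩
  rw [Set.mem_ofPred_eq, Set.mem_ofPred_eq, L.zsmul_add_mem_iff_sub_zsmul_mem h₁ k]
  change k - k₁ ∈ H ↔ _
  rw [hHd, Int.mem_zmultiples_iff]
  exact ⟨fun ⟨m, hm⟩ ↦ ⟨m, by omega⟩, fun ⟨m, hm⟩ ↦ ⟨m, by omega⟩⟩

end AddSubgroup

theorem Complex.ofReal_add_mul_ofReal_eq_iff {B : ℂ} (hB : B.im ≠ 0) {a b c d : ℝ} :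
    (a : ℂ) + B * b = c + B * d ↔ a = c ∧ b = d := by
  refine ⟨fun h ↦ ?_, fun ⟨hac, hbd⟩ ↦ by rw [hac, hbd]⟩
  have hre := congrArg Complex.re h
  have him := congrArg Complex.im h
  simp only [add_re, add_im, mul_re, mul_im, ofReal_re, ofReal_im] at hre him
  have hbd : b = d := mul_left_cancel₀ hB (by linarith)
  exact ⟨by subst hbd; linarith, hbd⟩

theorem Complex.exists_ofReal_add_mul_ofReal_eq_intCast_iff {B : ℂ} (hB : B.im ≠ 0) {a b : ℝ} :
    (∃ j m : ℤ, (a : ℂ) + B * b = j + B * m) ↔ (∃ j : ℤ, (j : ℝ) = a) ∧ ∃ m : ℤ, (m : ℝ) = b := by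
  simp only [← ofReal_intCast, ofReal_add_mul_ofReal_eq_iff hB]
  exact ⟨fun ⟨j, m, hj, hm⟩ ↦ ⟨⟨j, hj.symm⟩, m, hm.symm⟩,
    fun ⟨⟨j, hj⟩, m, hm⟩ ↦ ⟨j, m, hj.symm, hm.symm⟩⟩

theorem Real.exists_rat_eq_of_intCast_mul_eq {t j : ℤ} (ht : t ≠ 0) {r : ℝ}
    (h : (t : ℝ) * r = j) : ∃ q : ℚ, (q : ℝ) = r :=
  ⟨j / t, by push_cast; rw [← h]; field_simp⟩

/-- If the set `𝕂 = {k ∈ ℤ : (1−k)ς + ω + Bτ ∈ ℤ + Bℤ}` contains two distinct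
integers, then `ω, τ, x, y` are all rational and `𝕂` is an arithmetic
progression. -/
theorem degenerate_index_set_arithmetic_progression
    (B : ℂ) (hB : B.im ≠ 0) (ω τ x y : ℝ) (ς : ℂ)
    (hς : ς = (x : ℂ) + B * (y : ℂ))
    (K : Set ℤ)
    (hK : K = {k : ℤ | ∃ j m : ℤ,
      (1 - (k : ℂ)) * ς + (ω : ℂ) + B * (τ : ℂ) = (j : ℂ) + B * (m : ℂ)})
    (k₁ k₂ : ℤ) (hk₁ : k₁ ∈ K) (hk₂ : k₂ ∈ K) (hne : k₁ ≠ k₂) :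
    ((∃ q : ℚ, (q : ℝ) = ω) ∧ (∃ q : ℚ, (q : ℝ) = τ) ∧
      (∃ q : ℚ, (q : ℝ) = x) ∧ (∃ q : ℚ, (q : ℝ) = y)) ∧
    ∃ k' ∈ K, ∃ d : ℤ, 0 < d ∧ K = {k : ℤ | ∃ m : ℤ, k = k' + d * m} := by
  have hK_real : ∀ k : ℤ, k ∈ K ↔
      (∃ j : ℤ, (j : ℝ) = (1 - k) * x + ω) ∧ ∃ m : ℤ, (m : ℝ) = (1 - k) * y + τ := by
    intro k
    have hsplit : (1 - (k : ℂ)) * ς + ω + B * τ =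
        (((1 - k) * x + ω : ℝ) : ℂ) + B * (((1 - k) * y + τ : ℝ) : ℂ) := by
      rw [hς]; push_cast; ring
    rw [hK, Set.mem_ofPred_eq, hsplit, Complex.exists_ofReal_add_mul_ofReal_eq_intCast_iff hB]
  have hK_lattice : ∀ k : ℤ, k ∈ K ↔ k • -ς + (ς + ω + B * τ) ∈ AddSubgroup.closure {1, B} := by
    intro k
    simp only [hK, Set.mem_ofPred_eq, AddSubgroup.mem_closure_pair, zsmul_eq_mul, mul_one]
    refine exists₂_congr fun j m ↦ ⟨fun h ↦ ?_, fun h ↦ ?_⟩ <;> linear_combination -h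
  obtain ⟨⟨j₁, hj₁⟩, m₁, hm₁⟩ := (hK_real k₁).1 hk₁
  obtain ⟨⟨j₂, hj₂⟩, m₂, hm₂⟩ := (hK_real k₂).1 hk₂
  have hk : k₂ - k₁ ≠ 0 := sub_ne_zero.2 hne.symm
  obtain ⟨qx, rfl⟩ := Real.exists_rat_eq_of_intCast_mul_eq hk (j := j₁ - j₂) (r := x)
    (by push_cast; linear_combination hj₂ - hj₁)
  obtain ⟨qy, rfl⟩ := Real.exists_rat_eq_of_intCast_mul_eq hk (j := m₁ - m₂) (r := y)
    (by push_cast; linear_combination hm₂ - hm₁)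
  obtain ⟨d, hd, hKd⟩ := (AddSubgroup.closure {1, B}).exists_setOf_zsmul_add_mem_eq_arithProg
    ((hK_lattice k₁).1 hk₁) ((hK_lattice k₂).1 hk₂) hne
  refine ⟨⟨⟨j₁ - (1 - k₁) * qx, ?_⟩, ⟨m₁ - (1 - k₁) * qy, ?_⟩, ⟨qx, rfl⟩, ⟨qy, rfl⟩⟩,
    k₁, hk₁, d, hd, (Set.ext hK_lattice).trans hKd⟩
  · push_cast; linear_combination hj₁
  · push_cast; linear_combination hm₁
end

section
/- Let a_1, b_1, a_2, b_2 be complex numbers with a_1 + b_1 + a_2 + b_2 = 0, let M > 0 be such that |a_1|, |b_1|, |a_2|, |b_2| ≤ M, and let g : ℂ → ℂ be holomorphic on {z : |z| > M} with g(z)^4 = ((z − b_1)(z − b_2))/((z − a_1)(z − a_2)) for |z| > M and g(z) → 1 as z → ∞. Define A(z) = (g(z) + 1/g(z))/2 and B(z) = (g(z) − 1/g(z))/(−2i), and set S_1 = (b_1 − a_1) + (b_2 − a_2) and S_2 = (b_1^2 − a_1^2) + (b_2^2 − a_2^2). Then z^2·(A(z) − 1) remains bounded as z → ∞, z·B(z)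 → S_1/(4i), and z^2·(B(z) − S_1/(4iz)) → S_2/(8i) as z → ∞. -/
/-!
Write `g = 1 + u`. Since `g⁴ - 1 = 4u + 6u² + O(u³)`, the first two terms of the expansion
at infinity of the rational function `g⁴` determine those of `u`: `z u → α` and
`z² u - α z → β`. The entries are explicit in `u`, namely `A - 1 = u² / (2g)` and
`B = i u (u + 2) / (2g)`, so their expansions follow from those of `u`.
-/

open Filter Topology Bornology Finset Complex

section RootExpansion

variable {X : Type*} {l : Filter X} {w g : X → ℂ} {n : ℕ} {c d : ℂ}

theorem pow_sub_one_eq_mul_sub_one_add_sq {R : Type*} [CommRing R] (x : R) (n : ℕ) :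
    x ^ n - 1 = n * (x - 1) + (x - 1) ^ 2 * ∑ k ∈ range n, ∑ j ∈ range k, x ^ j := by
  have hsum : ∑ k ∈ range n, (x ^ k - 1) = (x - 1) * ∑ k ∈ range n, ∑ j ∈ range k, x ^ j := by
    rw [mul_sum]
    exact sum_congr rfl fun k _ ↦ by rw [mul_comm, geom_sum_mul]
  rw [sum_sub_distrib, sum_const, card_range, nsmul_one] at hsum
  rw [← geom_sum_mul]
  linear_combination (x - 1) * hsum

theorem sum_range_cast_eq_choose_two {R : Type*} [Semiring R] (n : ℕ) :
    ∑ k ∈ range n, (k : R) = n.choose 2 := by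
  rw [← Nat.cast_sum, Finset.sum_range_id, Nat.choose_two_right]

theorem tendsto_geom_sum_of_tendsto_one (hg : Tendsto g l (𝓝 1)) :
    Tendsto (fun x ↦ ∑ k ∈ range n, g x ^ k) l (𝓝 n) := by
  simpa using tendsto_finsetSum (range n) fun k _ ↦ hg.pow k

theorem tendsto_double_geom_sum_of_tendsto_one (hg : Tendsto g l (𝓝 1)) :
    Tendsto (fun x ↦ ∑ k ∈ range n, ∑ j ∈ range k, g x ^ j) l (𝓝 (n.choose 2)) := by
  rw [← sum_range_cast_eq_choose_two]
  exact tendsto_finsetSum (range n) fun k _ ↦ tendsto_geom_sum_of_tendsto_one hg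

theorem tendsto_mul_sub_one_of_tendsto_mul_pow_sub_one (hn : n ≠ 0) (hg : Tendsto g l (𝓝 1))
    (h : Tendsto (fun x ↦ w x * (g x ^ n - 1)) l (𝓝 c)) :
    Tendsto (fun x ↦ w x * (g x - 1)) l (𝓝 (c / n)) := by
  have hsum := tendsto_geom_sum_of_tendsto_one (n := n) hg
  have hn' : (n : ℂ) ≠ 0 := Nat.cast_ne_zero.mpr hn
  refine (h.div hsum hn').congr' ?_
  filter_upwards [hsum.eventually_ne hn'] with x hx
  rw [Pi.div_apply, ← geom_sum_mul, div_eq_iff hx]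
  ring

theorem tendsto_sq_mul_sub_one_of_tendsto_sq_mul_pow_sub_one (hn : n ≠ 0)
    (hg : Tendsto g l (𝓝 1)) (h₁ : Tendsto (fun x ↦ w x * (g x ^ n - 1)) l (𝓝 c))
    (h₂ : Tendsto (fun x ↦ w x ^ 2 * (g x ^ n - 1) - c * w x) l (𝓝 d)) :
    Tendsto (fun x ↦ w x ^ 2 * (g x - 1) - c / n * w x) l
      (𝓝 ((d - (c / n) ^ 2 * n.choose 2) / n)) := by
  have hlin := tendsto_mul_sub_one_of_tendsto_mul_pow_sub_one hn hg h₁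
  have hn' : (n : ℂ) ≠ 0 := Nat.cast_ne_zero.mpr hn
  have hsum := tendsto_double_geom_sum_of_tendsto_one (n := n) hg
  have h := (h₂.sub ((hlin.pow 2).mul hsum)).div_const (n : ℂ)
  refine h.congr fun x ↦ ?_
  rw [pow_sub_one_eq_mul_sub_one_add_sq, div_eq_iff hn']
  linear_combination w x * div_mul_cancel₀ c hn'

end RootExpansion

section QuadraticRatio

variable (a₁ a₂ b₁ b₂ : ℂ)

theorem tendsto_mul_sub_mul_sub_div_sq :
    Tendsto (fun z : ℂ ↦ (z - a₁) * (z - a₂) / z ^ 2) (cobounded ℂ) (𝓝 1) := by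
  have hinv : Tendsto (fun z : ℂ ↦ z⁻¹) (cobounded ℂ) (𝓝 0) := tendsto_inv₀_cobounded
  have h := ((tendsto_const_nhds (x := (1 : ℂ))).sub (hinv.const_mul a₁)).mul
    ((tendsto_const_nhds (x := (1 : ℂ))).sub (hinv.const_mul a₂))
  simp only [mul_zero, sub_zero, mul_one] at h
  refine h.congr' ?_
  filter_upwards [eventually_ne_cobounded 0] with z hz
  field_simp

theorem tendsto_mul_quadratic_ratio_sub_one :
    Tendsto (fun z : ℂ ↦ z * ((z - b₁) * (z - b₂) / ((z - a₁) * (z - a₂)) - 1)) (cobounded ℂ)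
      (𝓝 (a₁ + a₂ - b₁ - b₂)) := by
  have h := ((tendsto_const_nhds (x := a₁ + a₂ - b₁ - b₂)).add
    (tendsto_inv₀_cobounded.const_mul (b₁ * b₂ - a₁ * a₂))).div
    (tendsto_mul_sub_mul_sub_div_sq a₁ a₂) one_ne_zero
  simp only [mul_zero, add_zero, div_one] at h
  refine h.congr' ?_
  filter_upwards [eventually_ne_cobounded 0, eventually_ne_cobounded a₁,
    eventually_ne_cobounded a₂] with z hz h₁ h₂
  have h₁ : z - a₁ ≠ 0 := sub_ne_zero.mpr h₁
  have h₂ : z - a₂ ≠ 0 := sub_ne_zero.mpr h₂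
  rw [Pi.div_apply]
  field_simp
  ring

theorem tendsto_sq_mul_quadratic_ratio_sub_one :
    Tendsto (fun z : ℂ ↦ z ^ 2 * ((z - b₁) * (z - b₂) / ((z - a₁) * (z - a₂)) - 1)
      - (a₁ + a₂ - b₁ - b₂) * z) (cobounded ℂ)
      (𝓝 (b₁ * b₂ - a₁ * a₂ + (a₁ + a₂ - b₁ - b₂) * (a₁ + a₂))) := by
  have h := ((tendsto_const_nhds (x := b₁ * b₂ - a₁ * a₂ + (a₁ + a₂ - b₁ - b₂) * (a₁ + a₂))).add
    (tendsto_inv₀_cobounded.const_mul (-(a₁ + a₂ - b₁ - b₂) * (a₁ * a₂)))).div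
    (tendsto_mul_sub_mul_sub_div_sq a₁ a₂) one_ne_zero
  simp only [mul_zero, add_zero, div_one] at h
  refine h.congr' ?_
  filter_upwards [eventually_ne_cobounded 0, eventually_ne_cobounded a₁,
    eventually_ne_cobounded a₂] with z hz h₁ h₂
  have h₁ : z - a₁ ≠ 0 := sub_ne_zero.mpr h₁
  have h₂ : z - a₂ ≠ 0 := sub_ne_zero.mpr h₂
  rw [Pi.div_apply]
  field_simp
  ring

end QuadraticRatio

section Parametrix

noncomputable def parametrixA (γ : ℂ) : ℂ := (γ + 1 / γ) / 2

noncomputable def parametrixB (γ : ℂ) : ℂ := (γ - 1 / γ) / (-2 * I)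

theorem parametrixB_eq (γ : ℂ) : parametrixB γ = I * ((γ - 1) * (γ + 1)) / (2 * γ) := by
  rcases eq_or_ne γ 0 with rfl | hγ
  · simp [parametrixB]
  rw [parametrixB, div_eq_div_iff (by simp) (by simpa using hγ)]
  field_simp
  linear_combination (γ ^ 2 - 1) * I_sq

variable {X : Type*} {l : Filter X} {w g : X → ℂ} {α β : ℂ}

theorem tendsto_sq_mul_parametrixA_sub_one (hg : Tendsto g l (𝓝 1))
    (h₁ : Tendsto (fun x ↦ w x * (g x - 1)) l (𝓝 α)) :
    Tendsto (fun x ↦ w x ^ 2 * (parametrixA (g x) - 1)) l (𝓝 (α ^ 2 / 2)) := by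
  have h := (h₁.pow 2).div (hg.const_mul 2) (by norm_num)
  rw [mul_one] at h
  refine h.congr' ?_
  filter_upwards [hg.eventually_ne one_ne_zero] with x hx
  simp only [Pi.div_apply, parametrixA]
  field_simp
  ring

theorem tendsto_mul_parametrixB (hg : Tendsto g l (𝓝 1))
    (h₁ : Tendsto (fun x ↦ w x * (g x - 1)) l (𝓝 α)) :
    Tendsto (fun x ↦ w x * parametrixB (g x)) l (𝓝 (I * α)) := by
  have h := ((h₁.mul (hg.add_const 1)).const_mul I).div (hg.const_mul 2) (by norm_num)
  rw [show I * (α * (1 + 1)) / (2 * 1) = I * α by ring] at h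
  refine h.congr fun x ↦ ?_
  simp only [Pi.div_apply, parametrixB_eq]
  ring

theorem tendsto_sq_mul_parametrixB_sub (hg : Tendsto g l (𝓝 1))
    (h₁ : Tendsto (fun x ↦ w x * (g x - 1)) l (𝓝 α))
    (h₂ : Tendsto (fun x ↦ w x ^ 2 * (g x - 1) - α * w x) l (𝓝 β))
    (hw : ∀ᶠ x in l, w x ≠ 0) :
    Tendsto (fun x ↦ w x ^ 2 * (parametrixB (g x) - I * α / w x)) l
      (𝓝 (I * (β - α ^ 2 / 2))) := by
  have h := (((h₂.const_mul 2).add ((h₁.pow 2).sub (h₁.const_mul (2 * α)))).const_mul I).div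
    (hg.const_mul 2) (by norm_num)
  rw [show I * (2 * β + (α ^ 2 - 2 * α * α)) / (2 * 1) = I * (β - α ^ 2 / 2) by ring] at h
  refine h.congr' ?_
  filter_upwards [hg.eventually_ne one_ne_zero, hw] with x hg hw
  simp only [Pi.div_apply, parametrixB_eq]
  field_simp
  ring

end Parametrix

theorem parametrix_entries_expansion_at_infinity_general
    (a₁ b₁ a₂ b₂ : ℂ)
    (M : ℝ)
    (g : ℂ → ℂ)
    (hg4 : ∀ z : ℂ, M < ‖z‖ →
      (g z) ^ 4 = ((z - b₁) * (z - b₂)) / ((z - a₁) * (z - a₂)))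
    (hglim : Tendsto g (cobounded ℂ) (nhds 1))
    (A B : ℂ → ℂ)
    (hA : ∀ z : ℂ, A z = (g z + 1 / g z) / 2)
    (hB : ∀ z : ℂ, B z = (g z - 1 / g z) / (-2 * Complex.I))
    (S₁ S₂ : ℂ)
    (hS₁ : S₁ = (b₁ - a₁) + (b₂ - a₂))
    (hS₂ : S₂ = (b₁ ^ 2 - a₁ ^ 2) + (b₂ ^ 2 - a₂ ^ 2)) :
    (∃ c : ℝ, ∀ᶠ z : ℂ in cobounded ℂ, ‖z ^ 2 * (A z - 1)‖ ≤ c) ∧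
      Tendsto (fun z : ℂ => z * B z) (cobounded ℂ)
        (nhds (S₁ / (4 * Complex.I))) ∧
      Tendsto (fun z : ℂ => z ^ 2 * (B z - S₁ / (4 * Complex.I * z)))
        (cobounded ℂ) (nhds (S₂ / (8 * Complex.I))) := by
  obtain rfl : A = fun z ↦ parametrixA (g z) := funext hA
  obtain rfl : B = fun z ↦ parametrixB (g z) := funext hB
  have hg4 : ∀ᶠ z in cobounded ℂ, g z ^ 4 = (z - b₁) * (z - b₂) / ((z - a₁) * (z - a₂)) :=
    (tendsto_norm_cobounded_atTop.eventually_gt_atTop M).mono hg4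
  have hr₁ : Tendsto (fun z ↦ z * (g z ^ 4 - 1)) (cobounded ℂ) (𝓝 (a₁ + a₂ - b₁ - b₂)) :=
    (tendsto_mul_quadratic_ratio_sub_one a₁ a₂ b₁ b₂).congr' <|
      hg4.mono fun z h ↦ by simp only [h]
  have hr₂ : Tendsto (fun z ↦ z ^ 2 * (g z ^ 4 - 1) - (a₁ + a₂ - b₁ - b₂) * z) (cobounded ℂ)
      (𝓝 (b₁ * b₂ - a₁ * a₂ + (a₁ + a₂ - b₁ - b₂) * (a₁ + a₂))) :=
    (tendsto_sq_mul_quadratic_ratio_sub_one a₁ a₂ b₁ b₂).congr' <|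
      hg4.mono fun z h ↦ by simp only [h]
  have h₁ := tendsto_mul_sub_one_of_tendsto_mul_pow_sub_one four_ne_zero hglim hr₁
  have h₂ := tendsto_sq_mul_sub_one_of_tendsto_sq_mul_pow_sub_one four_ne_zero hglim hr₁ hr₂
  have hS₁I : S₁ / (4 * I) = I * ((a₁ + a₂ - b₁ - b₂) / (4 : ℕ)) := by
    rw [hS₁, div_mul_eq_div_div_swap, div_I]
    push_cast
    ring
  refine ⟨(tendsto_sq_mul_parametrixA_sub_one hglim h₁).norm.isBoundedUnder_le, ?_, ?_⟩
  · exact hS₁I ▸ tendsto_mul_parametrixB hglim h₁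
  · convert tendsto_sq_mul_parametrixB_sub hglim h₁ h₂ (eventually_ne_cobounded 0) using 3
    · rw [← div_div, hS₁I]
    · rw [hS₂, show ((Nat.choose 4 2 : ℕ) : ℂ) = 6 by norm_num [Nat.choose]]
      push_cast
      field_simp
      rw [I_sq]
      ring

/-- Expansions at infinity of the global parametrix entries
`A = (γ + γ⁻¹)/2` and `B = (γ − γ⁻¹)/(−2i)`, where
`γ(z)⁴ = (z−b₁)(z−b₂)/((z−a₁)(z−a₂))` and `γ(∞) = 1`:
`A(z) = 1 + O(z⁻²)` and `B(z) = S₁/(4iz) + S₂/(8iz²) + O(z⁻³)`. -/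
theorem parametrix_entries_expansion_at_infinity
    (a₁ b₁ a₂ b₂ : ℂ) (hsum : a₁ + b₁ + a₂ + b₂ = 0)
    (M : ℝ) (hM : 0 < M)
    (hb : ‖a₁‖ ≤ M ∧ ‖b₁‖ ≤ M ∧
      ‖a₂‖ ≤ M ∧ ‖b₂‖ ≤ M)
    (g : ℂ → ℂ) (hg : DifferentiableOn ℂ g {z : ℂ | M < ‖z‖})
    (hg4 : ∀ z : ℂ, M < ‖z‖ →
      (g z) ^ 4 = ((z - b₁) * (z - b₂)) / ((z - a₁) * (z - a₂)))
    (hglim : Tendsto g (cobounded ℂ) (nhds 1))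
    (A B : ℂ → ℂ)
    (hA : ∀ z : ℂ, A z = (g z + 1 / g z) / 2)
    (hB : ∀ z : ℂ, B z = (g z - 1 / g z) / (-2 * Complex.I))
    (S₁ S₂ : ℂ)
    (hS₁ : S₁ = (b₁ - a₁) + (b₂ - a₂))
    (hS₂ : S₂ = (b₁ ^ 2 - a₁ ^ 2) + (b₂ ^ 2 - a₂ ^ 2)) :
    (∃ c : ℝ, ∀ᶠ z : ℂ in cobounded ℂ, ‖z ^ 2 * (A z - 1)‖ ≤ c) ∧
      Tendsto (fun z : ℂ => z * B z) (cobounded ℂ)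
        (nhds (S₁ / (4 * Complex.I))) ∧
      Tendsto (fun z : ℂ => z ^ 2 * (B z - S₁ / (4 * Complex.I * z)))
        (cobounded ℂ) (nhds (S₂ / (8 * Complex.I))) :=
  parametrix_entries_expansion_at_infinity_general a₁ b₁ a₂ b₂ M g hg4 hglim A B hA hB S₁ S₂ hS₁ hS₂
end
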